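/- For all 1 ≤ i ≤ m and 1 ≤ j ≤ n with j ≤ i, one has D[i,j] = Σ_{j′=1}^{j} (a_{j′} − b_{j′})^2 + Σ_{i′=j+1}^{i} (a_{i′} − b_j)^2. -/

import Mathlib

/-- The DTW dynamic programming table recurrence for sequences `a` (length `m`)
and `b` (length `n`), both indexed from 1. -/
def DTWTable (a b : ℕ → ℝ) (m n : ℕ) (D : ℕ → ℕ → ℝ) : Prop :=
  D 1 1 = (a 1 - b 1) ^ 2 ∧
  (∀ i, 1 < i → i ≤ m → D i 1 = D (i - 1) 1 + (a i - b 1) ^ 2) ∧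
  (∀ j, 1 < j → j ≤ n → D 1 j = D 1 (j - 1) + (a 1 - b j) ^ 2) ∧
  (∀ i j, 1 < i → i ≤ m → 1 < j → j ≤ n →
    D i j = min (min (D i (j - 1)) (D (i - 1) j)) (D (i - 1) (j - 1)) + (a i - b j) ^ 2)

/-!
Since `b` increases while staying below the decreasing `a`, the cost `(a i - b j) ^ 2` decreases
as `j` grows. Hence on and below the diagonal the cheapest predecessor of a cell `(i, j)` is the
cell `(i - 1, j)` above it, or the diagonal cell when `i = j`: the optimal warping path runs along
the diagonal and then straight down. The one value outside the lower triangle that the induction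
needs, `D (i - 1) i`, is controlled by symmetry: the transposed table is the DTW table of `-b`
and `-a`, which satisfy the same hypotheses.
-/

open Finset

noncomputable def lowerCost (a b : ℕ → ℝ) (i j : ℕ) : ℝ :=
  (∑ l ∈ Icc 1 j, (a l - b l) ^ 2) + ∑ l ∈ Icc (j + 1) i, (a l - b j) ^ 2

section lowerCost

variable {a b : ℕ → ℝ} {i j : ℕ}

lemma lowerCost_self (a b : ℕ → ℝ) (j : ℕ) :
    lowerCost a b j j = ∑ l ∈ Icc 1 j, (a l - b l) ^ 2 := by
  simp [lowerCost]

lemma lowerCost_succ_self (a b : ℕ → ℝ) (j : ℕ) :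
    lowerCost a b (j + 1) (j + 1) = lowerCost a b j j + (a (j + 1) - b (j + 1)) ^ 2 := by
  rw [lowerCost_self, lowerCost_self, sum_Icc_succ_top (by omega)]

lemma lowerCost_neg_swap_self (a b : ℕ → ℝ) (j : ℕ) :
    lowerCost (-b) (-a) j j = lowerCost a b j j := by
  simp only [lowerCost_self, Pi.neg_apply]
  exact sum_congr rfl fun l _ => by ring

lemma lowerCost_succ_left (h : j ≤ i) :
    lowerCost a b (i + 1) j = lowerCost a b i j + (a (i + 1) - b j) ^ 2 := by
  rw [lowerCost, lowerCost, sum_Icc_succ_top (by omega), add_assoc]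

lemma lowerCost_succ_right (h : j + 1 ≤ i) :
    lowerCost a b i (j + 1) =
      (∑ l ∈ Icc 1 j, (a l - b l) ^ 2) + ∑ l ∈ Icc (j + 1) i, (a l - b (j + 1)) ^ 2 := by
  rw [lowerCost, sum_Icc_succ_top (by omega), ← insert_Icc_add_one_left_eq_Icc h,
    sum_insert (by simp), add_assoc]

lemma lowerCost_succ_right_le (h : j + 1 ≤ i) (hb : b j ≤ b (j + 1))
    (hba : ∀ l ∈ Icc (j + 1) i, b (j + 1) ≤ a l) :
    lowerCost a b i (j + 1) ≤ lowerCost a b i j := by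
  rw [lowerCost_succ_right h, lowerCost]
  gcongr with l hl
  exact sub_nonneg.2 (hba l hl)

lemma lowerCost_succ_succ (h : j + 1 ≤ i) (hb : b j ≤ b (j + 1))
    (hba : ∀ l ∈ Icc (j + 1) i, b (j + 1) ≤ a l) :
    lowerCost a b (i + 1) (j + 1) =
      min (min (lowerCost a b (i + 1) j) (lowerCost a b i (j + 1))) (lowerCost a b i j) +
        (a (i + 1) - b (j + 1)) ^ 2 := by
  have h_up := lowerCost_succ_right_le h hb hba
  have h_left : lowerCost a b i (j + 1) ≤ lowerCost a b (i + 1) j := by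
    rw [lowerCost_succ_left (by omega)]
    exact h_up.trans (le_add_of_nonneg_right (sq_nonneg _))
  rw [min_eq_right h_left, min_eq_left h_up, lowerCost_succ_left h]

lemma lowerCost_succ_self_eq_min (a b : ℕ → ℝ) (j : ℕ) :
    lowerCost a b (j + 1) (j + 1) =
      min (min (lowerCost a b (j + 1) j) (lowerCost (-b) (-a) (j + 1) j)) (lowerCost a b j j) +
        (a (j + 1) - b (j + 1)) ^ 2 := by
  rw [lowerCost_succ_left le_rfl, lowerCost_succ_left le_rfl, lowerCost_neg_swap_self,
    min_eq_right (le_min (le_add_of_nonneg_right (sq_nonneg _))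
      (le_add_of_nonneg_right (sq_nonneg _))), lowerCost_succ_self]

end lowerCost

structure OppositelySorted (a b : ℕ → ℝ) (m n : ℕ) : Prop where
  antitone_a : ∀ i, 1 ≤ i → i < m → a (i + 1) ≤ a i
  monotone_b : ∀ j, 1 ≤ j → j < n → b j ≤ b (j + 1)
  b_le_a : ∀ i j, 1 ≤ i → i ≤ m → 1 ≤ j → j ≤ n → b j ≤ a i

namespace OppositelySorted

variable {a b : ℕ → ℝ} {m n : ℕ}

lemma of_lt (hA : ∀ i, 1 ≤ i → i < m → a (i + 1) ≤ a i)
    (hB : ∀ j, 1 ≤ j → j < n → b j ≤ b (j + 1)) (hAB : b n < a m) :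
    OppositelySorted a b m n where
  antitone_a := hA
  monotone_b := hB
  b_le_a i j hi him hj hjn := by
    have ha : AntitoneOn a (Set.Icc 1 m) :=
      antitoneOn_of_add_one_le Set.ordConnected_Icc fun k _ hk hk1 => hA k hk.1 hk1.2
    have hb : MonotoneOn b (Set.Icc 1 n) :=
      monotoneOn_of_le_add_one Set.ordConnected_Icc fun k _ hk hk1 => hB k hk.1 hk1.2
    calc b j ≤ b n := hb ⟨hj, hjn⟩ ⟨hj.trans hjn, le_rfl⟩ hjn
      _ ≤ a m := hAB.le
      _ ≤ a i := ha ⟨hi, him⟩ ⟨hi.trans him, le_rfl⟩ him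

lemma swap (h : OppositelySorted a b m n) : OppositelySorted (-b) (-a) n m where
  antitone_a j hj hjn := neg_le_neg (h.monotone_b j hj hjn)
  monotone_b i hi him := neg_le_neg (h.antitone_a i hi him)
  b_le_a j i hj hjn hi him := neg_le_neg (h.b_le_a i j hi him hj hjn)

end OppositelySorted

namespace DTWTable

variable {a b : ℕ → ℝ} {m n : ℕ} {D : ℕ → ℕ → ℝ}

lemma succ_one (hD : DTWTable a b m n D) {i : ℕ} (hi : 1 ≤ i) (him : i + 1 ≤ m) :
    D (i + 1) 1 = D i 1 + (a (i + 1) - b 1) ^ 2 :=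
  hD.2.1 (i + 1) (by omega) him

lemma succ_succ (hD : DTWTable a b m n D) {i j : ℕ} (hi : 1 ≤ i) (him : i + 1 ≤ m)
    (hj : 1 ≤ j) (hjn : j + 1 ≤ n) :
    D (i + 1) (j + 1) =
      min (min (D (i + 1) j) (D i (j + 1))) (D i j) + (a (i + 1) - b (j + 1)) ^ 2 :=
  hD.2.2.2 (i + 1) (j + 1) (by omega) him (by omega) hjn

lemma swap (hD : DTWTable a b m n D) : DTWTable (-b) (-a) n m (Function.swap D) := by
  obtain ⟨h_one_one, h_col, h_row, h_succ⟩ := hD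
  refine ⟨?_, fun j hj hjn => ?_, fun i hi him => ?_, fun j i hj hjn hi him => ?_⟩
  · simp only [Function.swap, Pi.neg_apply, h_one_one]; ring
  · simp only [Function.swap, Pi.neg_apply, h_row j hj hjn]; ring
  · simp only [Function.swap, Pi.neg_apply, h_col i hi him]; ring
  · simp only [Function.swap, Pi.neg_apply, h_succ i j hi him hj hjn, min_comm (D i (j - 1))]
    ring

end DTWTable

theorem DTWTable.eq_lowerCost {a b : ℕ → ℝ} {m n : ℕ} {D : ℕ → ℕ → ℝ}
    (hD : DTWTable a b m n D) (hs : OppositelySorted a b m n) :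
    ∀ {i j : ℕ}, 1 ≤ j → j ≤ i → i ≤ m → j ≤ n → D i j = lowerCost a b i j
  | 1, 1, _, _, _, _ => by simp [lowerCost, hD.1]
  | i + 2, 1, _, _, him, hjn => by
    rw [hD.succ_one (by omega) him, hD.eq_lowerCost hs le_rfl (by omega) (by omega) hjn]
    exact (lowerCost_succ_left (by omega)).symm
  | i + 2, j + 2, _, hji, him, hjn => by
    rcases (show i = j ∨ j + 1 ≤ i by omega) with rfl | hlt
    · have h_up : D (i + 1) (i + 2) = lowerCost (-b) (-a) (i + 2) (i + 1) :=
        hD.swap.eq_lowerCost hs.swap (by omega) (by omega) hjn (by omega)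
      rw [hD.succ_succ (by omega) him (by omega) hjn, h_up,
        hD.eq_lowerCost hs (by omega) (by omega) him (by omega),
        hD.eq_lowerCost hs (by omega) le_rfl (by omega) (by omega)]
      exact (lowerCost_succ_self_eq_min a b (i + 1)).symm
    · rw [hD.succ_succ (by omega) him (by omega) hjn,
        hD.eq_lowerCost hs (by omega) (by omega) him (by omega),
        hD.eq_lowerCost hs (by omega) (by omega) (by omega) hjn,
        hD.eq_lowerCost hs (by omega) (by omega) (by omega) (by omega)]
      refine (lowerCost_succ_succ (by omega : j + 2 ≤ i + 1)
        (hs.monotone_b (j + 1) (by omega) (by omega)) fun l hl => ?_).symm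
      rw [mem_Icc] at hl
      exact hs.b_le_a l (j + 2) (by omega) (by omega) (by omega) hjn
  | _, 0, hj, hji, _, _ | 0, _ + 1, hj, hji, _, _ | 1, _ + 2, hj, hji, _, _ => by omega
termination_by i j => i + j

theorem stmt_10_general (a b : ℕ → ℝ) (m n : ℕ)
    (D : ℕ → ℕ → ℝ) (hD : DTWTable a b m n D)
    (hA : ∀ i, 1 ≤ i → i < m → a (i + 1) ≤ a i)
    (hB : ∀ j, 1 ≤ j → j < n → b j ≤ b (j + 1))
    (hAB : b n < a m) :
    ∀ i j, 1 ≤ i → i ≤ m → 1 ≤ j → j ≤ n → j ≤ i →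
      D i j = (∑ j' ∈ Finset.Icc 1 j, (a j' - b j') ^ 2) +
        ∑ i' ∈ Finset.Icc (j + 1) i, (a i' - b j) ^ 2 := by
  intro i j _ him hj hjn hji
  exact hD.eq_lowerCost (.of_lt hA hB hAB) hj hji him hjn

theorem stmt_10 (a b : ℕ → ℝ) (m n : ℕ) (hm : 1 ≤ m) (hn : 1 ≤ n)
    (D : ℕ → ℕ → ℝ) (hD : DTWTable a b m n D)
    (hA : ∀ i, 1 ≤ i → i < m → a (i + 1) ≤ a i)
    (hB : ∀ j, 1 ≤ j → j < n → b j ≤ b (j + 1))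
    (hAB : b n < a m) :
    ∀ i j, 1 ≤ i → i ≤ m → 1 ≤ j → j ≤ n → j ≤ i →
      D i j = (∑ j' ∈ Finset.Icc 1 j, (a j' - b j') ^ 2) +
        ∑ i' ∈ Finset.Icc (j + 1) i, (a i' - b j) ^ 2 :=
  stmt_10_general a b m n D hD hA hB hAB
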